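/- The family {[ω:1], [ω:2]} (one infinite class vs. two infinite classes) is InfEx_≅-learnable but not TxtEx_≈-learnable: a learner with positive and negative information can identify which structure is presented up to isomorphism, but no learner receiving only positive information can even identify the structure up to bi-embeddability. -/

import Mathlib

open Set

/-- An equivalence structure on ℕ. -/
structure EqStruct where
  rel : ℕ → ℕ → Prop
  equiv : Equivalence rel

namespace EqStruct

/-- Isomorphism of equivalence structures. -/
def Isom (A B : EqStruct) : Prop :=
  ∃ f : ℕ → ℕ, Function.Bijective f ∧ ∀ x y, A.rel x y ↔ B.rel (f x) (f y)

/-- Embedding of equivalence structures. -/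
def Embeds (A B : EqStruct) : Prop :=
  ∃ f : ℕ → ℕ, Function.Injective f ∧ ∀ x y, A.rel x y ↔ B.rel (f x) (f y)

/-- Bi-embeddability. -/
def Biembed (A B : EqStruct) : Prop := A.Embeds B ∧ B.Embeds A

/-- The equivalence class of `x`. -/
def classOf (A : EqStruct) (x : ℕ) : Set ℕ := {y | A.rel x y}

/-- The number of equivalence classes of size `k` (counted in `ℕ∞`). -/
noncomputable def numClasses (A : EqStruct) (k : ℕ∞) : ℕ∞ :=
  {C : Set ℕ | (∃ x, C = A.classOf x) ∧ C.encard = k}.encard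

/-- `A` finitely embeds into `B`: every finite substructure `A[s]` embeds into `B`. -/
def FinEmbeds (A B : EqStruct) : Prop :=
  ∀ s : ℕ, ∃ f : ℕ → ℕ, Set.InjOn f (Set.Iio s) ∧
    ∀ x < s, ∀ y < s, (A.rel x y ↔ B.rel (f x) (f y))

end EqStruct

/-- An informant for a structure: lists every pair, labelled correctly. -/
def IsInformant (A : EqStruct) (I : ℕ → (ℕ × ℕ) × Bool) : Prop :=
  (∀ p : ℕ × ℕ, ∃ n, (I n).1 = p) ∧
  (∀ n, ((I n).2 = true ↔ A.rel (I n).1.1 (I n).1.2))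

/-- A learner from informants: `none` is the `?` symbol. -/
abbrev Learner := List ((ℕ × ℕ) × Bool) → Option ℕ

/-- The initial segment `I[n]`. -/
def seg (I : ℕ → (ℕ × ℕ) × Bool) (n : ℕ) : List ((ℕ × ℕ) × Bool) :=
  (List.range n).map I

/-- `M` InfEx-learns `A` up to `sim`, with hypotheses indices into `Me`. -/
def InfExLearns (Me : ℕ → EqStruct) (sim : EqStruct → EqStruct → Prop)
    (M : Learner) (A : EqStruct) : Prop :=
  ∀ B, B.Isom A → ∀ I, IsInformant B I →
    ∃ e, sim (Me e) B ∧ ∃ N, ∀ n ≥ N, M (seg I n) = some e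

/-- `M` finitely learns `A` from informants up to `sim`. -/
def InfFinLearns (Me : ℕ → EqStruct) (sim : EqStruct → EqStruct → Prop)
    (M : Learner) (A : EqStruct) : Prop :=
  ∀ B, B.Isom A → ∀ I, IsInformant B I →
    ∃ e, sim (Me e) B ∧ (∃ n, M (seg I n) = some e) ∧
      ∀ n e', M (seg I n) = some e' → e' = e

/-- A text for a structure: enumerates exactly the related pairs (`none` is pause). -/
def IsText (A : EqStruct) (T : ℕ → Option (ℕ × ℕ)) : Prop :=
  ∀ x y, A.rel x y ↔ ∃ n, T n = some (x, y)

/-- A learner from texts. -/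
abbrev TxtLearner := List (Option (ℕ × ℕ)) → Option ℕ

/-- The initial segment `T[n]` of a text. -/
def tseg (T : ℕ → Option (ℕ × ℕ)) (n : ℕ) : List (Option (ℕ × ℕ)) :=
  (List.range n).map T

/-- `M` TxtEx-learns `A` up to `sim`. -/
def TxtExLearns (Me : ℕ → EqStruct) (sim : EqStruct → EqStruct → Prop)
    (M : TxtLearner) (A : EqStruct) : Prop :=
  ∀ B, B.Isom A → ∀ T, IsText B T →
    ∃ e, sim (Me e) B ∧ ∃ N, ∀ n ≥ N, M (tseg T n) = some e

/-- `σ` describes a finite part of `A`: it is an initial segment of an informant for `A`. -/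
def DescribesPart (A : EqStruct) (σ : List ((ℕ × ℕ) × Bool)) : Prop :=
  ∃ I, IsInformant A I ∧ σ = seg I σ.length

/-! With an informant, a negative datum refutes `[ω:1]` and is bound to appear in every informant
for a copy of `[ω:2]`, so the learner conjectures `[ω:1]` until it sees one.

With texts, run the Blum–Blum locking argument. A text learner for the total structure `[ω:1]`
has a locking sequence `σ`, and since every pair is related in `[ω:1]` no extension of `σ` can
move it. Build a copy of `[ω:2]` in which all numbers mentioned in `σ` lie in one class; on the
text for it that starts with `σ`, the learner stays on its conjecture for `[ω:1]`, which is not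
bi-embeddable with `[ω:2]`. -/

namespace EqStruct

theorem Isom.refl (A : EqStruct) : A.Isom A :=
  ⟨id, Function.bijective_id, fun _ _ => Iff.rfl⟩

theorem Isom.symm {A B : EqStruct} (h : A.Isom B) : B.Isom A := by
  obtain ⟨f, hf, hrel⟩ := h
  obtain ⟨g, hgf, hfg⟩ := Function.bijective_iff_has_inverse.mp hf
  refine ⟨g, Function.bijective_iff_has_inverse.mpr ⟨f, hfg, hgf⟩, fun x y => ?_⟩
  rw [hrel, hfg x, hfg y]

theorem Isom.trans {A B C : EqStruct} (h₁ : A.Isom B) (h₂ : B.Isom C) : A.Isom C := by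
  obtain ⟨f, hf, hrf⟩ := h₁
  obtain ⟨g, hg, hrg⟩ := h₂
  exact ⟨g ∘ f, hg.comp hf, fun x y => (hrf x y).trans (hrg (f x) (f y))⟩

theorem Embeds.trans {A B C : EqStruct} (h₁ : A.Embeds B) (h₂ : B.Embeds C) : A.Embeds C := by
  obtain ⟨f, hf, hrf⟩ := h₁
  obtain ⟨g, hg, hrg⟩ := h₂
  exact ⟨g ∘ f, hg.comp hf, fun x y => (hrf x y).trans (hrg (f x) (f y))⟩

def ofSet (S : Set ℕ) : EqStruct where
  rel x y := (x ∈ S ↔ y ∈ S)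
  equiv := ⟨fun _ => Iff.rfl, Iff.symm, Iff.trans⟩

theorem ofSet_isom_ofSet {S C : Set ℕ} (hS : S.Infinite) (hSc : Sᶜ.Infinite)
    (hC : C.Infinite) (hCc : Cᶜ.Infinite) : (ofSet S).Isom (ofSet C) := by
  classical
  have := hS.to_subtype
  have := hSc.to_subtype
  have := hC.to_subtype
  have := hCc.to_subtype
  obtain ⟨e₁⟩ : Nonempty (S ≃ C) := inferInstance
  obtain ⟨e₂⟩ : Nonempty (↥Sᶜ ≃ ↥Cᶜ) := inferInstance
  let f := Equiv.subtypeCongr e₁ e₂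
  have hf : ∀ x, x ∈ S ↔ f x ∈ C := by
    intro x
    by_cases hx : x ∈ S
    · simp [f, Equiv.subtypeCongr, hx]
    · have hfx : f x = e₂ ⟨x, hx⟩ := by simp [f, Equiv.subtypeCongr, hx]
      exact iff_of_false hx (hfx ▸ (e₂ ⟨x, hx⟩).2)
  exact ⟨f, f.bijective, fun x y => by simp only [ofSet, hf x, hf y]⟩

theorem compl_classOf_eq {B : EqStruct} {a b : ℕ}
    (hab : ¬ B.rel a b) (hcov : ∀ x, B.rel x a ∨ B.rel x b) :
    (B.classOf b)ᶜ = B.classOf a := by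
  have hE := B.equiv
  ext x
  change ¬ B.rel b x ↔ B.rel a x
  refine ⟨fun hbx => ?_, fun hax hbx => hab (hE.trans hax (hE.symm hbx))⟩
  exact (hcov x).elim hE.symm fun hxb => absurd (hE.symm hxb) hbx

theorem ofSet_classOf_isom {B : EqStruct} {a b : ℕ}
    (hab : ¬ B.rel a b) (hcov : ∀ x, B.rel x a ∨ B.rel x b) :
    (ofSet (B.classOf b)).Isom B := by
  have hE := B.equiv
  have hcompl := compl_classOf_eq hab hcov
  refine ⟨id, Function.bijective_id, fun u v => ⟨fun h => ?_, fun huv => ?_⟩⟩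
  · by_cases hu : u ∈ B.classOf b
    · exact hE.trans (hE.symm hu) (h.mp hu)
    · have hau : u ∈ B.classOf a := hcompl ▸ hu
      have hav : v ∈ B.classOf a := hcompl ▸ fun hv => hu (h.mpr hv)
      exact hE.trans (hE.symm hau) hav
  · exact ⟨fun hbu => hE.trans hbu huv, fun hbv => hE.trans hbv (hE.symm huv)⟩

theorem not_embeds_ofSet_of_total {A : EqStruct} (hA : ∀ x y, A.rel x y) {S : Set ℕ} {x y : ℕ}
    (hx : x ∈ S) (hy : y ∉ S) : ¬ (ofSet S).Embeds A := by
  rintro ⟨f, -, hf⟩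
  exact hy (((hf x y).mpr (hA _ _)).mp hx)

end EqStruct

open EqStruct

def negativeDataLearner (eA eB : ℕ) : Learner :=
  fun σ => if σ.any (fun p => !p.2) then some eB else some eA

theorem infExLearns_negativeDataLearner_of_total {Me : ℕ → EqStruct} {A : EqStruct}
    (hA : ∀ x y, A.rel x y) {eA : ℕ} (heA : (Me eA).Isom A) (eB : ℕ) :
    InfExLearns Me Isom (negativeDataLearner eA eB) A := by
  intro A' hA' I hI
  refine ⟨eA, heA.trans hA'.symm, 0, fun n _ => ?_⟩
  obtain ⟨f, -, hf⟩ := hA'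
  have hpos : ∀ m, (I m).2 = true := fun m => (hI.2 m).mpr ((hf _ _).mpr (hA _ _))
  simp [negativeDataLearner, seg, hpos]

theorem infExLearns_negativeDataLearner_of_not_rel {Me : ℕ → EqStruct} {B : EqStruct} {a b : ℕ}
    (hab : ¬ B.rel a b) (eA : ℕ) {eB : ℕ} (heB : (Me eB).Isom B) :
    InfExLearns Me Isom (negativeDataLearner eA eB) B := by
  intro B' hB' I hI
  refine ⟨eB, heB.trans hB'.symm, ?_⟩
  obtain ⟨f, ⟨-, hsurj⟩, hf⟩ := hB'
  obtain ⟨a', rfl⟩ := hsurj a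
  obtain ⟨b', rfl⟩ := hsurj b
  obtain ⟨n, hn⟩ := hI.1 (a', b')
  have hneg : (I n).2 = false := by
    refine Bool.eq_false_iff.mpr fun h => hab ((hf a' b').mp ?_)
    simpa [hn] using (hI.2 n).mp h
  refine ⟨n + 1, fun m hm => ?_⟩
  have hany : (seg I m).any (fun p => !p.2) = true :=
    List.any_eq_true.mpr ⟨I n, List.mem_map_of_mem (List.mem_range.mpr (by omega)), by simp [hneg]⟩
  simp [negativeDataLearner, hany]

open Classical in
noncomputable def canonicalText (A : EqStruct) (n : ℕ) : Option (ℕ × ℕ) :=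
  if A.rel (Nat.unpair n).1 (Nat.unpair n).2 then some (Nat.unpair n) else none

theorem isText_canonicalText (A : EqStruct) : IsText A (canonicalText A) := by
  intro x y
  refine ⟨fun h => ⟨Nat.pair x y, by simp [canonicalText, h]⟩, fun ⟨n, hn⟩ => ?_⟩
  unfold canonicalText at hn
  split_ifs at hn with h
  rwa [Option.some.inj hn] at h

def prependText (σ : List (Option (ℕ × ℕ))) (T : ℕ → Option (ℕ × ℕ)) (m : ℕ) : Option (ℕ × ℕ) :=
  if m < σ.length then σ.getD m none else T (m - σ.length)

theorem tseg_prependText (σ : List (Option (ℕ × ℕ))) (T : ℕ → Option (ℕ × ℕ)) (k : ℕ) :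
    tseg (prependText σ T) (σ.length + k) = σ ++ tseg T k := by
  refine List.ext_getElem (by simp [tseg]) fun i h₁ h₂ => ?_
  simp only [tseg, List.getElem_map, List.getElem_range, prependText, List.getElem_append]
  split_ifs with h <;> simp [h]

theorem IsText.prependText {A : EqStruct} {T : ℕ → Option (ℕ × ℕ)} (hT : IsText A T)
    {σ : List (Option (ℕ × ℕ))} (hσ : ∀ x y, some (x, y) ∈ σ → A.rel x y) :
    IsText A (prependText σ T) := by
  intro x y
  refine ⟨fun h => ?_, fun ⟨m, hm⟩ => ?_⟩
  · obtain ⟨n, hn⟩ := (hT x y).mp h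
    exact ⟨σ.length + n, by simp [_root_.prependText, hn]⟩
  · unfold _root_.prependText at hm
    split_ifs at hm with h
    · exact hσ x y (hm ▸ List.getD_eq_getElem _ _ h ▸ List.getElem_mem h)
    · exact (hT x y).mpr ⟨_, hm⟩

theorem exists_nat_bound_of_list (σ : List (Option (ℕ × ℕ))) :
    ∃ k, ∀ x y, some (x, y) ∈ σ → x < k ∧ y < k := by
  let size : Option (ℕ × ℕ) → ℕ := fun o => o.elim 0 fun p => p.1 + p.2
  refine ⟨(σ.map size).sum + 1, fun x y h => ?_⟩
  have : x + y ≤ (σ.map size).sum := List.le_sum_of_mem (List.mem_map_of_mem h)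
  omega

theorem exists_seq_of_prefix_chain {β : Type*} (L : ℕ → List β) (hL : ∀ n, L n <+: L (n + 1))
    (hlen : ∀ n, n < (L (n + 1)).length) :
    ∃ T : ℕ → β, ∀ n l, l <+: L n → (List.range l.length).map T = l := by
  have hmono : ∀ m n, m ≤ n → L m <+: L n := fun m n hmn => by
    induction hmn with
    | refl => exact List.prefix_refl _
    | step _ ih => exact ih.trans (hL _)
  refine ⟨fun m => (L (m + 1))[m]'(hlen m), fun n l hl => ?_⟩
  refine List.ext_getElem (by simp) fun i _ hi => ?_
  have hiL : i < (L n).length := lt_of_lt_of_le hi hl.length_le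
  simp only [List.getElem_map, List.getElem_range, hl.getElem hi]
  rw [(hmono _ _ (le_max_left (i + 1) n)).getElem, (hmono _ _ (le_max_right (i + 1) n)).getElem]

theorem exists_locking_of_converges {β : Type*} (r : ℕ → β) (M : List β → Option ℕ)
    (hM : ∀ T : ℕ → β, (∀ n, ∃ m, T m = r n) →
      ∃ e N, ∀ n ≥ N, M ((List.range n).map T) = some e) :
    ∃ σ, ∀ τ, M (σ ++ τ) = M σ := by
  by_contra! hmove
  choose τ hτ using hmove
  -- each stage adds the next required element, then a continuation that changes `M`'s mind
  let L : ℕ → List β := fun n => Nat.rec [] (fun n l => (l ++ [r n]) ++ τ (l ++ [r n])) n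
  have hstage : ∀ n, L n ++ [r n] <+: L (n + 1) := fun n => List.prefix_append _ _
  have hgrow : ∀ n, (L n).length + 1 ≤ (L (n + 1)).length := fun n => by
    simpa using (hstage n).length_le
  have hlen : ∀ n, n ≤ (L n).length := fun n => by
    induction n with
    | zero => exact Nat.zero_le _
    | succ n ih => exact (Nat.succ_le_succ ih).trans (hgrow n)
  obtain ⟨T, hT⟩ := exists_seq_of_prefix_chain L
    (fun n => (List.prefix_append _ _).trans (hstage n))
    (fun n => Nat.lt_of_lt_of_le (Nat.lt_succ_of_le (hlen n)) (hgrow n))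
  have henum : ∀ n, ∃ m, T m = r n := fun n => by
    have h := hT (n + 1) _ (hstage n)
    rw [List.length_append, List.length_singleton, List.range_succ, List.map_append,
      List.map_singleton] at h
    exact ⟨_, List.singleton_inj.mp (List.append_inj' h rfl).2⟩
  obtain ⟨e, N, hN⟩ := hM T henum
  have hval : ∀ n l, l <+: L n → N ≤ l.length → M l = some e := fun n l hl hNl => by
    rw [← hT n l hl]; exact hN _ hNl
  let l := L N ++ [r N]
  have hNl : N ≤ l.length := (hlen N).trans (by simp [l])
  exact hτ l ((hval (N + 1) _ (List.prefix_refl _) (hNl.trans (hstage N).length_le)).trans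
    (hval (N + 1) l (hstage N) hNl).symm)

theorem eq_some_of_locked {M : TxtLearner} {σ : List (Option (ℕ × ℕ))}
    {T : ℕ → Option (ℕ × ℕ)} {e N : ℕ} (hσ : ∀ τ, M (σ ++ τ) = M σ)
    (hN : ∀ n ≥ N, M (tseg (prependText σ T) n) = some e) : M σ = some e := by
  rw [← hσ (tseg T N), ← tseg_prependText]
  exact hN _ (by omega)

theorem TxtExLearns.exists_locking {Me : ℕ → EqStruct} {sim : EqStruct → EqStruct → Prop}
    {M : TxtLearner} {A : EqStruct} (hM : TxtExLearns Me sim M A) (hA : ∀ x y, A.rel x y) :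
    ∃ σ e, M σ = some e ∧ sim (Me e) A ∧ ∀ τ, M (σ ++ τ) = M σ := by
  obtain ⟨σ, hσ⟩ := exists_locking_of_converges (fun n => some (Nat.unpair n)) M fun T hT => by
    have hText : IsText A T := fun x y =>
      ⟨fun _ => (hT (Nat.pair x y)).imp fun _ hm => by simp [hm], fun _ => hA x y⟩
    obtain ⟨e, -, N, hN⟩ := hM A (Isom.refl A) T hText
    exact ⟨e, N, hN⟩
  obtain ⟨e, he, N, hN⟩ := hM A (Isom.refl A) _
    ((isText_canonicalText A).prependText (σ := σ) fun x y _ => hA x y)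
  exact ⟨σ, e, eq_some_of_locked hσ hN, he, hσ⟩

theorem not_txtExLearns_total_and_two_classes (Me : ℕ → EqStruct) {A B : EqStruct}
    (hA : ∀ x y, A.rel x y)
    (hB : ∃ a b, ¬ B.rel a b ∧ (B.classOf a).Infinite ∧ (B.classOf b).Infinite ∧
      ∀ x, B.rel x a ∨ B.rel x b) :
    ¬ ∃ M : TxtLearner, TxtExLearns Me Biembed M A ∧ TxtExLearns Me Biembed M B := by
  rintro ⟨M, hMA, hMB⟩
  obtain ⟨a, b, hab, hainf, hbinf, hcov⟩ := hB
  obtain ⟨σ, e, hMσ, hbiA, hσ⟩ := hMA.exists_locking hA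
  obtain ⟨k, hk⟩ := exists_nat_bound_of_list σ
  let S : Set ℕ := {x | k ≤ x ∧ Odd x}
  have hS : S.Infinite := infinite_of_forall_exists_gt fun n =>
    ⟨2 * (n + k) + 1, ⟨by omega, odd_two_mul_add_one _⟩, by omega⟩
  have hSc : Sᶜ.Infinite := infinite_of_forall_exists_gt fun n =>
    ⟨2 * (n + 1), fun (h : _ ∈ S) => Nat.not_odd_iff_even.mpr (even_two_mul _) h.2, by omega⟩
  have hB' : (ofSet S).Isom B :=
    (ofSet_isom_ofSet hS hSc hbinf (compl_classOf_eq hab hcov ▸ hainf)).trans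
      (ofSet_classOf_isom hab hcov)
  have hσS : ∀ x y, some (x, y) ∈ σ → (ofSet S).rel x y := fun x y h =>
    iff_of_false (fun hx => absurd hx.1 (by have := hk x y h; omega))
      (fun hy => absurd hy.1 (by have := hk x y h; omega))
  obtain ⟨e', hbi', N, hN⟩ := hMB _ hB' _ ((isText_canonicalText _).prependText hσS)
  obtain rfl : e' = e := Option.some.inj ((eq_some_of_locked hσ hN).symm.trans hMσ)
  exact not_embeds_ofSet_of_total hA (S := S) (x := 2 * k + 1) (y := 0)
    ⟨by omega, odd_two_mul_add_one k⟩ (fun h => Nat.not_odd_zero h.2) (hbi'.2.trans hbiA.1)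

/-- `{[ω:1], [ω:2]}` is InfEx-learnable up to isomorphism but not
TxtEx-learnable even up to bi-embeddability. -/
theorem stmt3 (Me : ℕ → EqStruct) (A B : EqStruct)
    (hA : ∀ x y, A.rel x y)
    (hB : ∃ a b, ¬ B.rel a b ∧ (B.classOf a).Infinite ∧ (B.classOf b).Infinite ∧
      ∀ x, B.rel x a ∨ B.rel x b)
    (heA : ∃ e, (Me e).Isom A) (heB : ∃ e, (Me e).Isom B) :
    (∃ M : Learner, InfExLearns Me EqStruct.Isom M A ∧ InfExLearns Me EqStruct.Isom M B) ∧
    ¬ ∃ M : TxtLearner, TxtExLearns Me EqStruct.Biembed M A ∧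
      TxtExLearns Me EqStruct.Biembed M B := by
  refine ⟨?_, not_txtExLearns_total_and_two_classes Me hA hB⟩
  obtain ⟨eA, heA⟩ := heA
  obtain ⟨eB, heB⟩ := heB
  obtain ⟨a, b, hab, -⟩ := hB
  exact ⟨negativeDataLearner eA eB, infExLearns_negativeDataLearner_of_total hA heA eB,
    infExLearns_negativeDataLearner_of_not_rel hab eA heB⟩
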